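/- Let (r_1, …, r_a) be a composition of r+1 with a ≥ 2, let (k_{x_1}, …, k_r) ∈ D_{(r_1⋯r_a)}, and set w = Π_2 Π_3 ⋯ Π_a. Let 1 ≤ m ≤ n ≤ r. If n − m + 1 > a − 1, then there exists l with m ≤ l ≤ n such that w(α_l) is a positive root. -/

import Mathlib

open Equiv Finset

/-- The simple reflection `s i = (i, i+1)` (1-based) in `S_{r+1}`, for `1 ≤ i ≤ r`;
the junk value `1` otherwise. -/
def sr (r i : ℕ) : Equiv.Perm (Fin (r + 1)) :=
  if h : 1 ≤ i ∧ i ≤ r then Equiv.swap ⟨i - 1, by omega⟩ ⟨i, by omega⟩ else 1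

/-- The cycle `π_k` with ambient index `i`, i.e. `s_i s_{i-1} ⋯ s_k`
(the identity when `k = i + 1`). -/
def cyc (r i k : ℕ) : Equiv.Perm (Fin (r + 1)) :=
  ((List.range (i + 1 - k)).map fun t => sr r (i - t)).prod

/-- The product `π_{k i} π_{k (i+1)} ⋯ π_{k j}`, the factor `π_{k t}` being the
cycle with ambient index `t`. -/
def cycProd (r : ℕ) (k : ℕ → ℕ) (i j : ℕ) : Equiv.Perm (Fin (r + 1)) :=
  ((List.range' i (j + 1 - i)).map fun t => cyc r t (k t)).prod

/-- Coxeter length of a permutation: the number of inversions. -/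
def lenInv {n : ℕ} (w : Equiv.Perm (Fin n)) : ℕ :=
  (Finset.univ.filter fun p : Fin n × Fin n => p.1 < p.2 ∧ w p.2 < w p.1).card

/-- Partial sums of a (1-based) composition: `psum c j = c 1 + ⋯ + c j`. -/
def psum (c : ℕ → ℕ) (j : ℕ) : ℕ := ∑ i ∈ Finset.Icc 1 j, c i

/-- The transpose partition of `(t 1, …, t b)`: `transp b t j = #{i ∈ [1,b] : t i ≥ j}`. -/
def transp (b : ℕ) (t : ℕ → ℕ) (j : ℕ) : ℕ :=
  ((Finset.Icc 1 b).filter fun i => j ≤ t i).card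

/-- The element of `Fin (r+1)` with value `i` (for `i ≤ r`). -/
def finOf (r i : ℕ) : Fin (r + 1) := ⟨min i r, by omega⟩

/-- `w(α_i)` is a positive root, where `α_i = e_i − e_{i+1}` (1-based), i.e. the
0-based pair `(i-1, i)`; `w(e_c − e_d) = e_{w c} − e_{w d}` is positive iff `w c < w d`. -/
def posRoot (r : ℕ) (w : Equiv.Perm (Fin (r + 1))) (i : ℕ) : Prop :=
  (w (finOf r (i - 1)) : ℕ) < w (finOf r i)

/-- `w(α_i)` is a negative root. -/
def negRoot (r : ℕ) (w : Equiv.Perm (Fin (r + 1))) (i : ℕ) : Prop :=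
  (w (finOf r i) : ℕ) < w (finOf r (i - 1))

/-- `w(α_i)` is a simple root. -/
def simpleRoot (r : ℕ) (w : Equiv.Perm (Fin (r + 1))) (i : ℕ) : Prop :=
  (w (finOf r i) : ℕ) = (w (finOf r (i - 1)) : ℕ) + 1

/-- `w(α_i) = α_j` (as roots: the image pair is `(j-1, j)` in 0-based indices). -/
def eqRoot (r : ℕ) (w : Equiv.Perm (Fin (r + 1))) (i j : ℕ) : Prop :=
  (w (finOf r (i - 1)) : ℕ) = j - 1 ∧ (w (finOf r i) : ℕ) = j

/-- `Π_l Π_{l+1} ⋯ Π_a` for the composition `c` and tuple `k`, where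
`Π_j = π_{k_{x_{j-1}}} ⋯ π_{k_{x_j - 1}}` and `x_j = psum c j`. -/
def tailProd (r a : ℕ) (c k : ℕ → ℕ) (l : ℕ) : Equiv.Perm (Fin (r + 1)) :=
  ((List.range' l (a + 1 - l)).map fun j => cycProd r k (psum c (j - 1)) (psum c j - 1)).prod

/-- The subgroup `W(P)`: generated by the simple reflections `s i` with `i ∈ [1,r]`
avoiding the partial sums `x 1, …, x (a-1)` of the composition `c`. -/
def WP (r a : ℕ) (c : ℕ → ℕ) : Subgroup (Equiv.Perm (Fin (r + 1))) :=
  Subgroup.closure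
    {g | ∃ i, 1 ≤ i ∧ i ≤ r ∧ (∀ j, 1 ≤ j → j ≤ a - 1 → i ≠ psum c j) ∧ g = sr r i}

/-- `α_i ∈ Δ_λ` for the composition `λ = (p 1, …, p m)` of `r+1`. -/
def inDelta (r m : ℕ) (p : ℕ → ℕ) (i : ℕ) : Prop :=
  1 ≤ i ∧ i ≤ r ∧ ∀ j, 1 ≤ j → j ≤ m - 1 → i ≠ psum p j

/-- The left coset `H · g`. -/
def cosetOf {G : Type*} [Group G] (H : Subgroup G) (g : G) : Set G :=
  {x | ∃ h ∈ H, x = h * g}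

/-- The (0-based) positions `u` and `v` lie in the same block of the composition
`μ^⊤ = transp b t`; a negative root `e_c − e_d` lies in `Φ⁻_{μ^⊤}` iff its two
indices lie in the same block. -/
def sameBlock (b : ℕ) (t : ℕ → ℕ) (u v : ℕ) : Prop :=
  ∃ j, 1 ≤ j ∧ j ≤ t 1 ∧
    psum (transp b t) (j - 1) ≤ u ∧ u < psum (transp b t) j ∧
    psum (transp b t) (j - 1) ≤ v ∧ v < psum (transp b t) j

/-!
In 0-based positions, each `Π_j⁻¹` is increasing on `[0, x_{j-1})`, and it sends the block
`[x_{j-1}, x_j)` to `i ↦ k_i - 1`, which is increasing because the `k_i` increase along the block;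
it maps both into `[0, x_j)` and fixes every position beyond. By downward induction on `l`,
`(Π_l ⋯ Π_a)⁻¹` is therefore increasing on `[0, x_{l-1})` and on every later block, so `w⁻¹` is
increasing on every block of the composition. If `w(α_l)` were negative for all `l ∈ [m, n]`, the
`n - m + 2` values `w(m - 1) > ⋯ > w(n)` would lie in pairwise different blocks, forcing
`n - m + 2 ≤ a`.
-/

lemma sr_inv (r i : ℕ) : (sr r i)⁻¹ = sr r i := by
  unfold sr
  split_ifs <;> simp

lemma sr_apply_val {r i : ℕ} (hi : 1 ≤ i) (hir : i ≤ r) (p : Fin (r + 1)) :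
    (sr r i p : ℕ) = if (p : ℕ) = i - 1 then i else if (p : ℕ) = i then i - 1 else p := by
  rw [sr, dif_pos ⟨hi, hir⟩, Equiv.swap_apply_def]
  split_ifs <;> simp only [Fin.ext_iff] at * <;> omega

lemma cyc_succ_self (r i : ℕ) : cyc r i (i + 1) = 1 := by
  simp [cyc]

lemma cyc_eq_mul_sr {r i k : ℕ} (hki : k ≤ i) : cyc r i k = cyc r i (k + 1) * sr r k := by
  rw [cyc, cyc, show i + 1 - k = (i + 1 - (k + 1)) + 1 by omega, List.range_succ,
    List.map_append, List.prod_append]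
  simp [show i - (i - k) = k by omega]

lemma cyc_inv_apply_val {r i k : ℕ} (hir : i ≤ r) (hk : 1 ≤ k) (hki : k ≤ i + 1)
    (p : Fin (r + 1)) :
    ((cyc r i k)⁻¹ p : ℕ) =
      if (p : ℕ) = i then k - 1 else if k - 1 ≤ p ∧ (p : ℕ) < i then p + 1 else p := by
  induction hd : i + 1 - k generalizing k with
  | zero =>
    obtain rfl : k = i + 1 := by omega
    rw [cyc_succ_self, inv_one, Perm.one_apply]
    split_ifs <;> omega
  | succ d ih =>
    rw [cyc_eq_mul_sr (by omega), mul_inv_rev, sr_inv, Perm.mul_apply,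
      sr_apply_val hk (by omega), ih (by omega) (by omega) (by omega)]
    split_ifs <;> omega

lemma strictMonoOn_cyc_inv {r i k : ℕ} (hir : i ≤ r) (hk : 1 ≤ k) (hki : k ≤ i + 1) :
    StrictMonoOn ⇑(cyc r i k)⁻¹ {p | (p : ℕ) < i} := by
  intro p (hp : (p : ℕ) < i) q (hq : (q : ℕ) < i) hpq
  rw [Fin.lt_def] at hpq ⊢
  rw [cyc_inv_apply_val hir hk hki, cyc_inv_apply_val hir hk hki]
  split_ifs <;> omega

lemma Equiv.Perm.mapsTo_of_forall_notMem_apply_eq {α : Type*} (σ : Perm α) {s : Set α}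
    (h : ∀ x ∉ s, σ x = x) : Set.MapsTo σ s s := by
  intro x hx
  by_contra hσx
  have := h _ hσx
  rw [σ.injective this] at hσx
  exact hσx hx

section CycProd

variable {r b e : ℕ} {k : ℕ → ℕ}

lemma cycProd_pred_self (hb : 1 ≤ b) : cycProd r k b (b - 1) = 1 := by
  simp [cycProd, show b - 1 + 1 - b = 0 by omega]

lemma cycProd_succ (hbe : b ≤ e + 1) :
    cycProd r k b (e + 1) = cycProd r k b e * cyc r (e + 1) (k (e + 1)) := by
  rw [cycProd, cycProd, show e + 1 + 1 - b = (e + 1 - b) + 1 by omega, List.range'_concat,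
    List.map_append, List.prod_append, show b + 1 * (e + 1 - b) = e + 1 by omega]
  simp

variable (hb : 1 ≤ b) (her : e ≤ r) (hk : ∀ i, b ≤ i → i ≤ e → 1 ≤ k i ∧ k i ≤ i + 1)
include hb her hk

lemma cycProd_inv_apply_of_lt (hbe : b ≤ e + 1) {p : Fin (r + 1)} (hp : e < p) :
    (cycProd r k b e)⁻¹ p = p := by
  induction e, (show b - 1 ≤ e by omega) using Nat.le_induction with
  | base => simp [cycProd_pred_self hb]
  | succ e _ ih =>
    have hke := hk (e + 1) (by omega) le_rfl
    rw [cycProd_succ (by omega), mul_inv_rev, Perm.mul_apply,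
      ih (by omega) (fun i h1 h2 => hk i h1 (by omega)) (by omega) (by omega)]
    ext
    rw [cyc_inv_apply_val her hke.1 hke.2]
    split_ifs <;> omega

lemma mapsTo_cycProd_inv (hbe : b ≤ e + 1) :
    Set.MapsTo ⇑(cycProd r k b e)⁻¹ {p | (p : ℕ) ≤ e} {p | (p : ℕ) ≤ e} :=
  Perm.mapsTo_of_forall_notMem_apply_eq _ fun _ hp =>
    cycProd_inv_apply_of_lt hb her hk hbe (not_le.mp hp)

lemma strictMonoOn_cycProd_inv_lt (hbe : b ≤ e + 1) :
    StrictMonoOn ⇑(cycProd r k b e)⁻¹ {p | (p : ℕ) < b} := by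
  induction e, (show b - 1 ≤ e by omega) using Nat.le_induction with
  | base => simpa [cycProd_pred_self hb] using strictMono_id.strictMonoOn _
  | succ e _ ih =>
    have hke := hk (e + 1) (by omega) le_rfl
    have hk' : ∀ i, b ≤ i → i ≤ e → 1 ≤ k i ∧ k i ≤ i + 1 := fun i h1 h2 => hk i h1 (by omega)
    rw [cycProd_succ (by omega), mul_inv_rev, Perm.coe_mul]
    refine (strictMonoOn_cyc_inv her hke.1 hke.2).comp (ih (by omega) hk' (by omega)) ?_
    intro p (hp : (p : ℕ) < b)
    have := mapsTo_cycProd_inv hb (by omega) hk' (by omega) (show (p : ℕ) ≤ e by omega)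
    exact Nat.lt_succ_of_le this

lemma cycProd_inv_apply_of_mem (hkmono : StrictMonoOn k (Set.Icc b e)) {u : Fin (r + 1)}
    (hbu : b ≤ u) (hue : u ≤ e) : ((cycProd r k b e)⁻¹ u : ℕ) = k u - 1 := by
  induction e, (show b - 1 ≤ e by omega) using Nat.le_induction with
  | base => omega
  | succ e _ ih =>
    have hke := hk (e + 1) (by omega) le_rfl
    have hk' : ∀ i, b ≤ i → i ≤ e → 1 ≤ k i ∧ k i ≤ i + 1 := fun i h1 h2 => hk i h1 (by omega)
    rw [cycProd_succ (by omega), mul_inv_rev, Perm.mul_apply,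
      cyc_inv_apply_val her hke.1 hke.2]
    rcases Nat.lt_or_ge (u : ℕ) (e + 1) with hu | hu
    · have hku := hk u hbu (by omega)
      have hlt : k u < k (e + 1) := hkmono ⟨hbu, by omega⟩ ⟨by omega, le_rfl⟩ hu
      rw [ih (by omega) hk' (hkmono.mono (Set.Icc_subset_Icc_right (by omega))) (by omega)]
      split_ifs <;> omega
    · have hu' : (u : ℕ) = e + 1 := by omega
      rw [cycProd_inv_apply_of_lt hb (by omega) hk' (by omega) (show e < u by omega), if_pos hu',
        hu']

lemma strictMonoOn_cycProd_inv_Icc (hkmono : StrictMonoOn k (Set.Icc b e)) :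
    StrictMonoOn ⇑(cycProd r k b e)⁻¹ {p | b ≤ (p : ℕ) ∧ (p : ℕ) ≤ e} := by
  intro u hu v hv huv
  have hku := hk u hu.1 hu.2
  have hkuv : k u < k v := hkmono hu hv huv
  rw [Fin.lt_def, cycProd_inv_apply_of_mem hb her hk hkmono hu.1 hu.2,
    cycProd_inv_apply_of_mem hb her hk hkmono hv.1 hv.2]
  omega

end CycProd

lemma psum_zero (c : ℕ → ℕ) : psum c 0 = 0 := by
  simp [psum]

lemma psum_one (c : ℕ → ℕ) : psum c 1 = c 1 := by
  simp [psum]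

lemma psum_mono (c : ℕ → ℕ) : Monotone (psum c) := fun _ _ h =>
  Finset.sum_le_sum_of_subset (Finset.Icc_subset_Icc le_rfl h)

/-- The block `[x_{j-1}, x_j)` of the composition `c`, in 0-based positions. -/
def compBlock (r : ℕ) (c : ℕ → ℕ) (j : ℕ) : Set (Fin (r + 1)) :=
  {p | psum c (j - 1) ≤ p ∧ (p : ℕ) < psum c j}

lemma exists_mem_compBlock {r a : ℕ} {c : ℕ → ℕ} (hcsum : psum c a = r + 1) (p : Fin (r + 1)) :
    ∃ j, 1 ≤ j ∧ j ≤ a ∧ p ∈ compBlock r c j := by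
  classical
  have hex : ∃ j, (p : ℕ) < psum c j := ⟨a, by omega⟩
  have hj0 : Nat.find hex ≠ 0 := by
    intro h0
    have := Nat.find_spec hex
    rw [h0, psum_zero] at this
    omega
  exact ⟨Nat.find hex, by omega, Nat.find_le (by omega),
    not_lt.mp (Nat.find_min hex (by omega)), Nat.find_spec hex⟩

lemma tailProd_succ_self (r a : ℕ) (c k : ℕ → ℕ) : tailProd r a c k (a + 1) = 1 := by
  simp [tailProd]

lemma tailProd_eq_mul {r a l : ℕ} {c k : ℕ → ℕ} (hla : l ≤ a) :
    tailProd r a c k l =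
      cycProd r k (psum c (l - 1)) (psum c l - 1) * tailProd r a c k (l + 1) := by
  rw [tailProd, tailProd, show a + 1 - l = (a + 1 - (l + 1)) + 1 by omega, List.range'_succ,
    List.map_cons, List.prod_cons]

section TailProd

variable {r a : ℕ} {c k : ℕ → ℕ} (hc1 : 1 ≤ c 1) (hcsum : psum c a = r + 1)
  (hka : ∀ i, psum c 1 ≤ i → i ≤ r → 1 ≤ k i ∧ k i ≤ i + 1)
  (hkb : ∀ j, 2 ≤ j → j ≤ a → ∀ i, psum c (j - 1) ≤ i → i + 1 ≤ psum c j - 1 →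
    k i < k (i + 1))
include hc1 hcsum hka hkb

lemma strictMonoOn_tailProd_inv {l : ℕ} (hl : 2 ≤ l) (hla : l ≤ a + 1) :
    StrictMonoOn ⇑(tailProd r a c k l)⁻¹ {p | (p : ℕ) < psum c (l - 1)} ∧
      ∀ j, l ≤ j → j ≤ a → StrictMonoOn ⇑(tailProd r a c k l)⁻¹ (compBlock r c j) := by
  induction hla using Nat.decreasingInduction with
  | self =>
    rw [tailProd_succ_self, inv_one, Perm.coe_one]
    exact ⟨strictMono_id.strictMonoOn _, fun j hj hja => by omega⟩
  | of_succ l hla ih =>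
    obtain ⟨ih_lt, ih_block⟩ := ih (by omega)
    rw [Nat.add_sub_cancel] at ih_lt
    set b := psum c (l - 1)
    set e := psum c l - 1
    have hb : psum c 1 ≤ b := psum_mono c (by omega)
    have hbl : b ≤ psum c l := psum_mono c (by omega)
    have hla' : psum c l ≤ r + 1 := hcsum ▸ psum_mono c (by omega)
    rw [psum_one] at hb
    have hk : ∀ i, b ≤ i → i ≤ e → 1 ≤ k i ∧ k i ≤ i + 1 := fun i h1 h2 =>
      hka i (by rw [psum_one]; omega) (by omega)
    have hkmono : StrictMonoOn k (Set.Icc b e) :=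
      strictMonoOn_of_lt_add_one Set.ordConnected_Icc fun i _ hi hi1 =>
        hkb l hl (by omega) i hi.1 hi1.2
    have hmaps : ∀ s : Set (Fin (r + 1)), s ⊆ {p | (p : ℕ) ≤ e} →
        Set.MapsTo ⇑(cycProd r k b e)⁻¹ s {p | (p : ℕ) < psum c l} := fun s hs p hp =>
      show _ < _ from Nat.lt_of_le_of_lt
        (mapsTo_cycProd_inv (by omega) (by omega) hk (by omega) (hs hp)) (by omega)
    rw [tailProd_eq_mul (by omega), mul_inv_rev, Perm.coe_mul]
    refine ⟨ih_lt.comp (strictMonoOn_cycProd_inv_lt (by omega) (by omega) hk (by omega))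
      (hmaps _ fun p (hp : (p : ℕ) < b) => show (p : ℕ) ≤ e by omega), fun j hj hja => ?_⟩
    rcases hj.eq_or_lt with rfl | hjl
    · refine ih_lt.comp ?_ (hmaps _ fun p hp => show (p : ℕ) ≤ e by have := hp.2; omega)
      exact (strictMonoOn_cycProd_inv_Icc (by omega) (by omega) hk hkmono).mono
        fun p hp => ⟨hp.1, by have := hp.2; omega⟩
    · refine (ih_block j hjl hja).congr fun p hp => ?_
      have hlj : psum c l ≤ psum c (j - 1) := psum_mono c (by omega)
      simp only [Function.comp_apply]
      rw [cycProd_inv_apply_of_lt (by omega) (by omega) hk (by omega) (by have := hp.1; omega)]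

end TailProd

lemma finOf_val {r i : ℕ} (h : i ≤ r) : (finOf r i : ℕ) = i :=
  min_eq_left h

lemma negRoot_of_not_posRoot {r l : ℕ} {w : Perm (Fin (r + 1))} (hl : 1 ≤ l) (hlr : l ≤ r)
    (h : ¬ posRoot r w l) : negRoot r w l := by
  have hne : w (finOf r l) ≠ w (finOf r (l - 1)) := fun heq => by
    have := congrArg Fin.val (w.injective heq)
    rw [finOf_val hlr, finOf_val (by omega)] at this
    omega
  rw [posRoot, not_lt] at h
  exact lt_of_le_of_ne h (Fin.val_ne_of_ne hne)

lemma add_two_sub_le_of_forall_negRoot {r a m n : ℕ} {c : ℕ → ℕ} {w : Perm (Fin (r + 1))}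
    (hcsum : psum c a = r + 1)
    (hw : ∀ j, 1 ≤ j → j ≤ a → StrictMonoOn ⇑w⁻¹ (compBlock r c j))
    (hm : 1 ≤ m) (hn : n ≤ r) (hneg : ∀ l, m ≤ l → l ≤ n → negRoot r w l) :
    n + 2 - m ≤ a := by
  choose β hβ using exists_mem_compBlock hcsum
  set g : ℕ → Fin (r + 1) := fun l => w (finOf r l)
  have hanti : StrictAntiOn g (Set.Icc (m - 1) n) :=
    strictAntiOn_of_add_one_lt Set.ordConnected_Icc fun l _ hl hl1 => by
      have := hneg (l + 1) (by have := hl.1; omega) hl1.2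
      rwa [negRoot, Nat.add_sub_cancel, ← Fin.lt_def] at this
  have hsep : ∀ x ∈ Set.Icc (m - 1) n, ∀ y ∈ Set.Icc (m - 1) n, x < y → β (g x) ≠ β (g y) := by
    intro x hx y hy hxy heq
    obtain ⟨hj1, hja, hgx⟩ := hβ (g x)
    have hgy : g y ∈ compBlock r c (β (g x)) := heq ▸ (hβ (g y)).2.2
    have := hw _ hj1 hja hgy hgx (hanti hx hy hxy)
    simp only [g, Perm.coe_inv, Equiv.symm_apply_apply, Fin.lt_def] at this
    rw [finOf_val (hy.2.trans hn), finOf_val (hx.2.trans hn)] at this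
    omega
  have hinj : Set.InjOn (β ∘ g) (Finset.Icc (m - 1) n) := by
    rw [Finset.coe_Icc]
    intro x hx y hy hxy
    by_contra hne
    rcases lt_or_gt_of_ne hne with h | h
    · exact hsep x hx y hy h hxy
    · exact hsep y hy x hx h hxy.symm
  have hcard := Finset.card_le_card_of_injOn (t := Finset.Icc 1 a) _
    (fun l _ => by simpa using (hβ (g l)).imp_right And.left) hinj
  simp only [Nat.card_Icc] at hcard
  omega

theorem stmt14_general (r a m n : ℕ) (ha : 2 ≤ a) (c k : ℕ → ℕ)
    (hc : ∀ j, 1 ≤ j → j ≤ a → 1 ≤ c j) (hcsum : psum c a = r + 1)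
    (hka : ∀ i, psum c 1 ≤ i → i ≤ r → 1 ≤ k i ∧ k i ≤ i + 1)
    (hkb : ∀ j, 2 ≤ j → j ≤ a → ∀ i, psum c (j - 1) ≤ i → i + 1 ≤ psum c j - 1 →
      k i < k (i + 1))
    (hm : 1 ≤ m) (hmn : m ≤ n) (hn : n ≤ r)
    (hcount : a - 1 < n - m + 1) :
    ∃ l, m ≤ l ∧ l ≤ n ∧ posRoot r (tailProd r a c k 2) l := by
  by_contra! hcon
  obtain ⟨hw_first, hw_later⟩ :=
    strictMonoOn_tailProd_inv (hc 1 le_rfl (by omega)) hcsum hka hkb le_rfl (by omega)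
  have hw : ∀ j, 1 ≤ j → j ≤ a →
      StrictMonoOn ⇑(tailProd r a c k 2)⁻¹ (compBlock r c j) := by
    intro j hj hja
    rcases hj.eq_or_lt with rfl | hj
    · exact hw_first.mono fun p hp => hp.2
    · exact hw_later j hj hja
  have := add_two_sub_le_of_forall_negRoot hcsum hw hm hn fun l hml hln =>
    negRoot_of_not_posRoot (by omega) (by omega) (hcon l hml hln)
  omega

/-- if a string of consecutive simple roots `α_m, …, α_n` is longer
than `a − 1`, then `w = Π_2 ⋯ Π_a` sends one of them to a positive root. -/
theorem stmt14 (r a m n : ℕ) (hr : 1 ≤ r) (ha : 2 ≤ a) (c k : ℕ → ℕ)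
    (hc : ∀ j, 1 ≤ j → j ≤ a → 1 ≤ c j) (hcsum : psum c a = r + 1)
    (hka : ∀ i, psum c 1 ≤ i → i ≤ r → 1 ≤ k i ∧ k i ≤ i + 1)
    (hkb : ∀ j, 2 ≤ j → j ≤ a → ∀ i, psum c (j - 1) ≤ i → i + 1 ≤ psum c j - 1 →
      k i < k (i + 1))
    (hm : 1 ≤ m) (hmn : m ≤ n) (hn : n ≤ r)
    (hcount : a - 1 < n - m + 1) :
    ∃ l, m ≤ l ∧ l ≤ n ∧ posRoot r (tailProd r a c k 2) l :=
  stmt14_general r a m n ha c k hc hcsum hka hkb hm hmn hn hcount
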